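/- For any tree T on at least three vertices, γ_{r2}(T) ≥ γ(T) + ⌈(ℓ(T) − p(T))/Δ(T)⌉, where ℓ(T) is the number of leaves, p(T) the number of penultimate vertices, and Δ(T) the maximum degree. -/

import Mathlib

/-!
Fix a minimum 2-rainbow dominating function `f`. The vertices that are neither leaves nor
penultimate and carry a nonempty label, together with all penultimate vertices, dominate `T`.
Comparing the size of this set with the weight of `f` penultimate vertex by penultimate vertex
gives `Δ γ + ℓ ≤ p + Δ γ_{r2}`: a penultimate vertex `v` with `f v ≠ {1,2}` forces a nonempty
label on each of its (at most `Δ`) leaves, so its leaves pay for `v` itself.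
-/

open Finset

/-- A `k`-rainbow dominating function: every vertex assigned `∅` sees all `k` colors
among its neighbors. -/
def SimpleGraph.IsRainbowDF {V : Type*} {k : ℕ} (G : SimpleGraph V)
    (f : V → Finset (Fin k)) : Prop :=
  ∀ v, f v = ∅ → ∀ c : Fin k, ∃ u, G.Adj v u ∧ c ∈ f u

/-- The `k`-rainbow domination number. -/
noncomputable def SimpleGraph.rainbowNum {V : Type*} [Fintype V] (G : SimpleGraph V)
    (k : ℕ) : ℕ :=
  sInf {w | ∃ f : V → Finset (Fin k), G.IsRainbowDF f ∧ w = ∑ v, (f v).card}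

/-- `S` is a dominating set of `G`. -/
def SimpleGraph.IsDomSet {V : Type*} (G : SimpleGraph V) (S : Set V) : Prop :=
  ∀ v, v ∉ S → ∃ u ∈ S, G.Adj v u

/-- The domination number. -/
noncomputable def SimpleGraph.domNum {V : Type*} [Fintype V] (G : SimpleGraph V) : ℕ :=
  sInf {n | ∃ S : Finset V, G.IsDomSet ↑S ∧ n = S.card}

namespace SimpleGraph

section

variable {V : Type*} [Fintype V] {G : SimpleGraph V}

lemma domNum_le_card {S : Finset V} (hS : G.IsDomSet ↑S) : G.domNum ≤ S.card :=
  Nat.sInf_le ⟨S, hS, rfl⟩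

lemma exists_isRainbowDF_sum_card_eq_rainbowNum (k : ℕ) :
    ∃ f : V → Finset (Fin k), G.IsRainbowDF f ∧ ∑ v, (f v).card = G.rainbowNum k := by
  obtain ⟨f, hf, hw⟩ := Nat.sInf_mem (s := {w | ∃ f : V → Finset (Fin k),
    G.IsRainbowDF f ∧ w = ∑ v, (f v).card})
    ⟨_, fun _ => univ, fun _ hv c => absurd (hv ▸ mem_univ c) (notMem_empty c), rfl⟩
  exact ⟨f, hf, hw.symm⟩

end

variable {V : Type*} [Fintype V] (G : SimpleGraph V) [DecidableRel G.Adj]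

def leaves : Finset V := univ.filter fun v => G.degree v = 1

def penultimates : Finset V := univ.filter fun v => ∃ u, G.Adj v u ∧ G.degree u = 1

def leafNeighbors (v : V) : Finset V := G.leaves.filter (G.Adj v)

variable {G}

lemma adj_eq_of_degree_eq_one {u v w : V} (hu : G.degree u = 1) (hv : G.Adj u v)
    (hw : G.Adj u w) : v = w :=
  (degree_eq_one_iff_existsUnique_adj.mp hu).unique hv hw

lemma Connected.disjoint_leaves_penultimates (hG : G.Connected) (h3 : 3 ≤ Fintype.card V) :
    Disjoint G.leaves G.penultimates := by
  classical
  refine Finset.disjoint_left.mpr fun v hvL hvP => ?_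
  obtain ⟨u, hvu, hu⟩ := (mem_filter.mp hvP).2
  have hv : G.degree v = 1 := (mem_filter.mp hvL).2
  obtain ⟨w, -, hw⟩ := exists_mem_notMem_of_card_lt_card (s := {u, v}) (t := univ)
    ((card_le_two).trans_lt (by rwa [card_univ]))
  obtain ⟨d, -, hd, hd'⟩ := (hG.preconnected v w).some.exists_boundary_dart ({u, v} : Finset V)
    (by simp) (by simpa using hw)
  have hadj := d.adj
  simp only [coe_insert, coe_singleton, Set.mem_insert_iff, Set.mem_singleton_iff] at hd hd'
  rcases hd with hd | hd <;> rw [hd] at hadj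
  · exact hd' (Or.inr (adj_eq_of_degree_eq_one hu hadj hvu.symm))
  · exact hd' (Or.inl (adj_eq_of_degree_eq_one hv hadj hvu))

lemma mem_penultimates_iff_nonempty {v : V} :
    v ∈ G.penultimates ↔ (G.leafNeighbors v).Nonempty := by
  simp [penultimates, leafNeighbors, leaves, Finset.Nonempty, and_comm]

lemma card_leafNeighbors_le_maxDegree (v : V) : (G.leafNeighbors v).card ≤ G.maxDegree :=
  calc (G.leafNeighbors v).card ≤ (G.neighborFinset v).card :=
        card_le_card fun _ hu => (mem_neighborFinset _ _ _).mpr (mem_filter.mp hu).2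
    _ = G.degree v := card_neighborFinset_eq_degree _ _
    _ ≤ G.maxDegree := degree_le_maxDegree _ _

lemma sum_leaves_eq_sum_penultimates {M : Type*} [AddCommMonoid M] (g : V → M) :
    ∑ u ∈ G.leaves, g u = ∑ v ∈ G.penultimates, ∑ u ∈ G.leafNeighbors v, g u := by
  classical
  rw [sum_comm' (t' := G.leaves) (s' := fun u => G.neighborFinset u)]
  · refine sum_congr rfl fun u hu => ?_
    rw [sum_const, card_neighborFinset_eq_degree, (mem_filter.mp hu).2, one_smul]
  · intro v u
    simp only [leafNeighbors, leaves, penultimates, mem_filter, mem_univ, true_and,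
      mem_neighborFinset]
    exact ⟨fun ⟨_, hu, hvu⟩ => ⟨hvu.symm, hu⟩, fun ⟨huv, hu⟩ => ⟨⟨u, huv.symm, hu⟩, hu, huv.symm⟩⟩

namespace IsRainbowDF

variable {k : ℕ} {f : V → Finset (Fin k)}

lemma eq_univ_of_adj_of_degree_eq_one (hf : G.IsRainbowDF f) {u v : V}
    (hu : G.degree u = 1) (huv : G.Adj u v) (hfu : f u = ∅) : f v = univ :=
  eq_univ_of_forall fun c => by
    obtain ⟨w, huw, hc⟩ := hf u hfu c
    rwa [adj_eq_of_degree_eq_one hu huw huv] at hc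

lemma maxDegree_add_card_leafNeighbors_le (hf : G.IsRainbowDF f) (hk : 2 ≤ k) {v : V}
    (hv : v ∈ G.penultimates) :
    G.maxDegree + (G.leafNeighbors v).card ≤
      G.maxDegree * (f v).card + 1 + G.maxDegree * ∑ u ∈ G.leafNeighbors v, (f u).card := by
  have hA := card_leafNeighbors_le_maxDegree (G := G) v
  by_cases hfv : f v = univ
  · have : G.maxDegree * 2 ≤ G.maxDegree * (f v).card :=
      Nat.mul_le_mul_left _ (by simpa [hfv] using hk)
    omega
  · have hA1 := (mem_penultimates_iff_nonempty.mp hv).card_pos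
    have hsum : (G.leafNeighbors v).card ≤ ∑ u ∈ G.leafNeighbors v, (f u).card := by
      simpa using card_nsmul_le_sum _ (fun u => (f u).card) 1 fun u hu => by
        obtain ⟨huL, hvu⟩ := mem_filter.mp hu
        exact card_pos.mpr <| nonempty_iff_ne_empty.mpr fun hfu =>
          hfv (hf.eq_univ_of_adj_of_degree_eq_one (mem_filter.mp huL).2 hvu.symm hfu)
    -- For the leaves `A` at `v`, of weight `s`: `Δ s ≥ Δ |A| ≥ Δ + |A| - 1` as `1 ≤ |A| ≤ Δ`.
    nlinarith [Nat.mul_le_mul_left G.maxDegree hsum, Nat.mul_le_mul (Nat.sub_le_sub_right hA 1)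
      (Nat.sub_le_sub_right hA1 1)]

lemma isDomSet [DecidableEq V] (hf : G.IsRainbowDF f) (hk : 0 < k) :
    G.IsDomSet ↑((univ \ (G.leaves ∪ G.penultimates)).filter (f · ≠ ∅) ∪ G.penultimates) := by
  intro v hv
  simp only [mem_coe, mem_union, mem_filter, mem_sdiff, mem_univ, true_and, not_or] at hv ⊢
  by_cases hvL : v ∈ G.leaves
  · have hdeg : G.degree v = 1 := (mem_filter.mp hvL).2
    obtain ⟨u, hvu⟩ := (G.degree_pos_iff_exists_adj v).mp (by omega)
    exact ⟨u, Or.inr (mem_filter.mpr ⟨mem_univ _, v, hvu.symm, hdeg⟩), hvu⟩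
  · have hfv : f v = ∅ := by tauto
    obtain ⟨u, hvu, hc⟩ := hf v hfv ⟨0, hk⟩
    have huL : u ∉ G.leaves := fun huL =>
      hv.2 (mem_filter.mpr ⟨mem_univ _, u, hvu, (mem_filter.mp huL).2⟩)
    exact ⟨u, by by_cases huP : u ∈ G.penultimates <;> simp_all [ne_empty_of_mem hc], hvu⟩

end IsRainbowDF

lemma maxDegree_mul_domNum_add_card_leaves_le {k : ℕ} (hk : 2 ≤ k)
    (hLP : Disjoint G.leaves G.penultimates) :
    G.maxDegree * G.domNum + G.leaves.card ≤
      G.penultimates.card + G.maxDegree * G.rainbowNum k := by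
  classical
  obtain ⟨f, hf, hw⟩ := G.exists_isRainbowDF_sum_card_eq_rainbowNum k
  set R := univ \ (G.leaves ∪ G.penultimates)
  have hγ : G.domNum ≤ (R.filter (f · ≠ ∅)).card + G.penultimates.card :=
    (domNum_le_card (hf.isDomSet (by omega))).trans (card_union_le _ _)
  have hR : (R.filter (f · ≠ ∅)).card ≤ ∑ v ∈ R, (f v).card := by
    rw [card_filter]
    exact sum_le_sum fun v _ => by
      split_ifs with h
      exacts [card_pos.mpr (nonempty_iff_ne_empty.mpr h), Nat.zero_le _]
  have hweight : ∑ v, (f v).card = ∑ v ∈ R, (f v).card + (∑ v ∈ G.leaves, (f v).card +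
      ∑ v ∈ G.penultimates, (f v).card) := by
    rw [← sum_union hLP, sum_sdiff (subset_univ _)]
  have hpen : G.maxDegree * G.penultimates.card + G.leaves.card ≤
      G.maxDegree * ∑ v ∈ G.penultimates, (f v).card + G.penultimates.card +
        G.maxDegree * ∑ v ∈ G.leaves, (f v).card := by
    have := sum_le_sum fun v hv => hf.maxDegree_add_card_leafNeighbors_le hk (v := v) hv
    simp only [sum_add_distrib, ← mul_sum, sum_const, smul_eq_mul, mul_one] at this
    have hL : G.leaves.card = ∑ v ∈ G.penultimates, (G.leafNeighbors v).card := by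
      simpa using sum_leaves_eq_sum_penultimates (G := G) fun _ => (1 : ℕ)
    rwa [hL, sum_leaves_eq_sum_penultimates, mul_comm]
  calc G.maxDegree * G.domNum + G.leaves.card
      ≤ G.maxDegree * (R.filter (f · ≠ ∅)).card +
          (G.maxDegree * G.penultimates.card + G.leaves.card) := by
        nlinarith [Nat.mul_le_mul_left G.maxDegree hγ]
    _ ≤ G.penultimates.card + G.maxDegree * G.rainbowNum k := by
        rw [← hw, hweight]
        nlinarith [Nat.mul_le_mul_left G.maxDegree hR]

end SimpleGraph

theorem rainbow2_ge_domNum_add_general {V : Type*} [Fintype V]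
    (T : SimpleGraph V) [DecidableRel T.Adj] (hT : T.IsTree)
    (hn : 3 ≤ Fintype.card V) :
    (T.domNum : ℤ) +
        ⌈(((univ.filter fun v => T.degree v = 1).card : ℚ) -
            ((univ.filter fun v => ∃ u, T.Adj v u ∧ T.degree u = 1).card : ℚ)) /
          (T.maxDegree : ℚ)⌉ ≤ (T.rainbowNum 2 : ℤ) := by
  classical
  have : Nontrivial V := Fintype.one_lt_card_iff_nontrivial.mp (by omega)
  have hΔ : (0 : ℚ) < T.maxDegree := by
    obtain ⟨v⟩ := ‹Nontrivial V›.to_nonempty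
    exact_mod_cast (hT.1.preconnected.degree_pos_of_nontrivial v).trans_le
      (T.degree_le_maxDegree v)
  have key : (T.maxDegree * T.domNum + T.leaves.card : ℚ) ≤
      T.penultimates.card + T.maxDegree * T.rainbowNum 2 := by
    exact_mod_cast T.maxDegree_mul_domNum_add_card_leaves_le le_rfl
      (hT.1.disjoint_leaves_penultimates hn)
  rw [← le_sub_iff_add_le', Int.ceil_le, div_le_iff₀ hΔ]
  push_cast
  change (T.leaves.card - T.penultimates.card : ℚ) ≤ _
  linarith

/-- For any tree `T` on at least three vertices,
`γ_{r2}(T) ≥ γ(T) + ⌈(ℓ(T) − p(T))/Δ(T)⌉`, where `ℓ(T)` is the number of leaves,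
`p(T)` the number of penultimate vertices (vertices adjacent to a leaf) and `Δ(T)`
the maximum degree. -/
theorem rainbow2_ge_domNum_add {V : Type*} [Fintype V] [DecidableEq V]
    (T : SimpleGraph V) [DecidableRel T.Adj] (hT : T.IsTree)
    (hn : 3 ≤ Fintype.card V) :
    (T.domNum : ℤ) +
        ⌈(((univ.filter fun v => T.degree v = 1).card : ℚ) -
            ((univ.filter fun v => ∃ u, T.Adj v u ∧ T.degree u = 1).card : ℚ)) /
          (T.maxDegree : ℚ)⌉ ≤ (T.rainbowNum 2 : ℤ) :=
  rainbow2_ge_domNum_add_general T hT hn
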